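/- arXiv:1810.11234 — 2 statements merged into one kernel-verified Lean document; each statement's English description precedes it below -/
import Mathlib

section
/- For every nonnegative integer a, the family {E_{a,d}}_{d∈ℤ} is a partition of ℕ, and consequently d ↦ μ_a(d) defines a probability measure on ℤ (the densities sum to 1). -/
/-!
Every `n` lies in exactly one `E a d`, namely for `d = s₂(n+a) - s₂(n)`, so the fibre counts up
to `N` add up to `N` and every finite partial sum of the densities is at most `1`. For the reverse
inequality the mass must not escape to infinity: if the last `k` binary digits of `n` are below
`2^k - a`, adding `a` causes no carry beyond them, so `|s₂(n+a) - s₂(n)| ≤ k`. The remaining `n`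
occupy at most `a` residues modulo `2^k`, hence a proportion of about `a / 2^k`, and the densities
of `E a d` with `|d| ≤ k` add up to at least `1 - a / 2^k`.
-/

open Filter

/-- Binary sum-of-digits function. -/
def s2 (n : ℕ) : ℕ := (Nat.digits 2 n).sum

/-- The set `E_{a,d} = {n : s₂(n+a) - s₂(n) = d}`. -/
def E (a : ℕ) (d : ℤ) : Set ℕ := {n | (s2 (n + a) : ℤ) - s2 n = d}

/-- `hasDensity a d x` means `E_{a,d}` has asymptotic density `x`. -/
def hasDensity (a : ℕ) (d : ℤ) (x : ℝ) : Prop :=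
  Tendsto (fun N : ℕ =>
      (((Finset.range N).filter (fun n => (s2 (n + a) : ℤ) - s2 n = d)).card : ℝ) / N)
    atTop (nhds x)

open Finset Topology

section Density

variable {β : Type*} [DecidableEq β]

lemma nonneg_of_tendsto_card_filter_div {p : ℕ → Prop} [DecidablePred p] {x : ℝ}
    (h : Tendsto (fun N : ℕ => (#{n ∈ range N | p n} : ℝ) / N) atTop (𝓝 x)) : 0 ≤ x :=
  ge_of_tendsto' h fun _ => by positivity

lemma sum_card_filter_eq_card_filter_mem (f : ℕ → β) (s : Finset ℕ) (u : Finset β) :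
    ∑ b ∈ u, #{n ∈ s | f n = b} = #{n ∈ s | f n ∈ u} := by
  rw [card_eq_sum_card_fiberwise (s := {n ∈ s | f n ∈ u}) (f := f) (t := u)
    fun n hn => (mem_filter.1 hn).2]
  refine sum_congr rfl fun b hb => ?_
  rw [filter_filter]
  exact congrArg card (filter_congr fun n _ => ⟨fun h => ⟨by rwa [h], h⟩, And.right⟩)

theorem hasSum_one_of_tendsto_card_filter_eq {f : ℕ → β} {μ : β → ℝ}
    (hμ : ∀ b, Tendsto (fun N : ℕ => (#{n ∈ range N | f n = b} : ℝ) / N) atTop (𝓝 (μ b)))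
    (htight : ∀ ε > 0, ∃ u : Finset β, ∀ᶠ N in atTop, (#{n ∈ range N | f n ∉ u} : ℝ) ≤ ε * N) :
    HasSum μ 1 := by
  have hnonneg : ∀ b, 0 ≤ μ b := fun b => nonneg_of_tendsto_card_filter_div (hμ b)
  have hsum (u : Finset β) : Tendsto (fun N : ℕ => (#{n ∈ range N | f n ∈ u} : ℝ) / N) atTop
      (𝓝 (∑ b ∈ u, μ b)) := by
    simpa only [← sum_div, ← Nat.cast_sum, sum_card_filter_eq_card_filter_mem]
      using tendsto_finsetSum u fun b _ => hμ b
  have hle (u : Finset β) : ∑ b ∈ u, μ b ≤ 1 :=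
    le_of_tendsto' (hsum u) fun N => div_le_one_of_le₀
      (by exact_mod_cast (card_filter_le _ _).trans (card_range N).le) (Nat.cast_nonneg _)
  have hsummable : Summable μ := summable_of_sum_le hnonneg hle
  suffices ∑' b, μ b = 1 from this ▸ hsummable.hasSum
  refine le_antisymm (hsummable.tsum_le_of_sum_le hle) (le_of_forall_sub_le fun ε hε => ?_)
  obtain ⟨u, hu⟩ := htight ε hε
  refine le_trans ?_ (hsummable.sum_le_tsum u fun b _ => hnonneg b)
  refine ge_of_tendsto (hsum u) ?_
  filter_upwards [hu, eventually_gt_atTop 0] with N hN hN0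
  have hsplit : (#{n ∈ range N | f n ∈ u} : ℝ) + #{n ∈ range N | f n ∉ u} = N := by
    exact_mod_cast (card_filter_add_card_filter_not _).trans (card_range N)
  rw [le_div_iff₀ (by positivity)]
  linarith

end Density

lemma Nat.digits_sum_add_base_pow_mul {b k r : ℕ} (hb : 1 < b) (hr : r < b ^ k) (q : ℕ) :
    (b.digits (r + b ^ k * q)).sum = (b.digits r).sum + (b.digits q).sum := by
  rcases q.eq_zero_or_pos with rfl | hq
  · simp
  have hlen : (b.digits r).length ≤ k := (Nat.digits_length_le_iff hb r).2 hr
  rw [← Nat.add_sub_cancel' hlen, ← Nat.digits_append_zeroes_append_digits hb hq]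
  simp

lemma s2_add_two_pow_mul {k r : ℕ} (hr : r < 2 ^ k) (q : ℕ) :
    s2 (r + 2 ^ k * q) = s2 r + s2 q :=
  Nat.digits_sum_add_base_pow_mul one_lt_two hr q

lemma s2_le_of_lt_two_pow {k x : ℕ} (hx : x < 2 ^ k) : s2 x ≤ k :=
  calc s2 x ≤ (Nat.digits 2 x).length • 1 :=
        List.sum_le_card_nsmul _ 1 fun _ hd => Nat.le_of_lt_succ (Nat.digits_lt_base one_lt_two hd)
    _ ≤ k := by simpa using (Nat.digits_length_le_iff one_lt_two x).2 hx

lemma s2_add_sub_s2_mem_Icc {a k n : ℕ} (hn : n % 2 ^ k + a < 2 ^ k) :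
    (s2 (n + a) : ℤ) - s2 n ∈ Icc (-(k : ℤ)) k := by
  have hlow : n % 2 ^ k < 2 ^ k := Nat.mod_lt _ (by positivity)
  have hdiv := Nat.mod_add_div n (2 ^ k)
  have e1 : s2 n = s2 (n % 2 ^ k) + s2 (n / 2 ^ k) := by
    rw [← s2_add_two_pow_mul hlow, hdiv]
  have e2 : s2 (n + a) = s2 (n % 2 ^ k + a) + s2 (n / 2 ^ k) := by
    rw [← s2_add_two_pow_mul hn]
    congr 1
    omega
  have b1 := s2_le_of_lt_two_pow hlow
  have b2 := s2_le_of_lt_two_pow hn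
  rw [mem_Icc, e1, e2]
  omega

lemma card_filter_sub_le_mod_le (M a N : ℕ) (hM : 0 < M) :
    #{n ∈ range N | M - a ≤ n % M} ≤ (N / M + 1) * a :=
  calc #{n ∈ range N | M - a ≤ n % M} ≤ #(range (N / M + 1) ×ˢ Ico (M - a) M) := by
        refine card_le_card_of_injOn (fun n => (n / M, n % M)) (fun n hn => ?_) fun n _ m _ h => ?_
        · simp only [coe_filter, mem_range, Set.mem_ofPred_eq] at hn
          simp only [coe_product, coe_range, coe_Ico, Set.mem_prod, Set.mem_Iio, Set.mem_Ico]
          exact ⟨Nat.lt_succ_of_le (Nat.div_le_div_right hn.1.le), hn.2, Nat.mod_lt n hM⟩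
        · simp only [Prod.mk.injEq] at h
          rw [← Nat.div_add_mod n M, ← Nat.div_add_mod m M, h.1, h.2]
    _ ≤ (N / M + 1) * a := by
        rw [card_product, card_range, Nat.card_Ico]
        exact Nat.mul_le_mul_left _ (by omega)

lemma card_filter_s2_sub_notMem_Icc_le (a k N : ℕ) :
    #{n ∈ range N | (s2 (n + a) : ℤ) - s2 n ∉ Icc (-(k : ℤ)) k} ≤ (N / 2 ^ k + 1) * a := by
  refine (card_le_card fun n hn => ?_).trans (card_filter_sub_le_mod_le (2 ^ k) a N (by positivity))
  simp only [mem_filter] at hn ⊢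
  refine ⟨hn.1, not_lt.1 fun h => hn.2 (s2_add_sub_s2_mem_Icc ?_)⟩
  omega

lemma exists_eventually_card_filter_s2_sub_notMem_le (a : ℕ) {ε : ℝ} (hε : 0 < ε) :
    ∃ u : Finset ℤ, ∀ᶠ N in atTop,
      (#{n ∈ range N | (s2 (n + a) : ℤ) - s2 n ∉ u} : ℝ) ≤ ε * N := by
  -- `a / 2^k < ε / 2` bounds the complete blocks of `2^k`; the last, incomplete one costs
  -- another `a ≤ ε N / 2` once `N ≥ 2a / ε`.
  obtain ⟨k, hk⟩ := pow_unbounded_of_one_lt (2 * a / ε) (one_lt_two : (1 : ℝ) < 2)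
  refine ⟨Icc (-(k : ℤ)) k, ?_⟩
  filter_upwards [eventually_ge_atTop ⌈2 * a / ε⌉₊] with N hN
  have hM : (0 : ℝ) < 2 ^ k := by positivity
  rw [div_lt_iff₀ hε] at hk
  have hN' : 2 * a ≤ ε * N := by
    rw [← div_le_iff₀' hε]
    exact Nat.ceil_le.1 hN
  have hhead : (N : ℝ) / 2 ^ k * a ≤ ε * N / 2 := by
    rw [div_mul_eq_mul_div, div_le_iff₀ hM]
    nlinarith [N.cast_nonneg (α := ℝ)]
  calc (#{n ∈ range N | (s2 (n + a) : ℤ) - s2 n ∉ Icc (-(k : ℤ)) k} : ℝ)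
      ≤ ((N / 2 ^ k : ℕ) + 1) * a := by exact_mod_cast card_filter_s2_sub_notMem_Icc_le a k N
    _ ≤ ((N : ℝ) / 2 ^ k + 1) * a := by
        gcongr
        exact_mod_cast Nat.cast_div_le
    _ ≤ ε * N := by linarith

theorem E_partition_and_density_prob (a : ℕ) (μ : ℤ → ℝ)
    (hμ : ∀ d, hasDensity a d (μ d)) :
    (⋃ d : ℤ, E a d) = Set.univ ∧
    (Pairwise fun d d' : ℤ => Disjoint (E a d) (E a d')) ∧
    (∀ d, 0 ≤ μ d) ∧ HasSum μ 1 :=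
  ⟨Set.iUnion_eq_univ_iff.2 fun _ => ⟨_, rfl⟩,
    fun _ _ hdd' => Set.disjoint_left.2 fun _ hd hd' => hdd' (hd.symm.trans hd'),
    fun d => nonneg_of_tendsto_card_filter_div (hμ d),
    hasSum_one_of_tendsto_card_filter_eq hμ fun _ hε =>
      exists_eventually_card_filter_s2_sub_notMem_le a hε⟩
end

section
/- For every a ∈ ℕ and d ∈ ℤ, μ_{2a+1}(d) = (1/2)·(μ_a(d-1) + μ_{a+1}(d+1)). -/
open Filter

lemma s2_two_mul (m : ℕ) : s2 (2 * m) = s2 m := by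
  rcases Nat.eq_zero_or_pos m with h | h
  · simp [h, s2]
  · unfold s2
    rw [Nat.digits_def' (by norm_num : 1 < 2) (by omega)]
    simp [Nat.mul_div_cancel_left, Nat.mul_mod_right]

lemma s2_two_mul_add_one (m : ℕ) : s2 (2 * m + 1) = s2 m + 1 := by
  unfold s2
  rw [Nat.digits_def' (by norm_num : 1 < 2) (by omega)]
  have h1 : (2 * m + 1) % 2 = 1 := by omega
  have h2 : (2 * m + 1) / 2 = m := by omega
  rw [h1, h2]
  simp [Nat.add_comm]

lemma card_filter_two_mul (P : ℕ → Prop) [DecidablePred P] (N : ℕ) :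
    ((Finset.range (2 * N)).filter P).card =
      ((Finset.range N).filter (fun m => P (2 * m))).card +
      ((Finset.range N).filter (fun m => P (2 * m + 1))).card := by
  induction N with
  | zero => simp
  | succ n ih =>
    have h : 2 * (n + 1) = (2 * n + 1) + 1 := by ring
    rw [h, Finset.range_add_one, Finset.range_add_one, Finset.range_add_one,
      Finset.filter_insert, Finset.filter_insert, Finset.filter_insert, Finset.filter_insert]
    by_cases h1 : P (2 * n) <;> by_cases h2 : P (2 * n + 1) <;>
      simp [h1, h2, Finset.card_insert_of_notMem, Finset.mem_insert,
        Finset.mem_filter, Finset.mem_range, ih] <;> omega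

theorem mu_two_a_plus_one (a : ℕ) (d : ℤ) (x y z : ℝ)
    (hx : hasDensity a (d - 1) x) (hy : hasDensity (a + 1) (d + 1) y)
    (hz : hasDensity (2 * a + 1) d z) :
    z = (1 / 2) * (x + y) := by
  unfold hasDensity at hx hy hz
  set A : ℕ → ℕ := fun N =>
    ((Finset.range N).filter (fun n => (s2 (n + a) : ℤ) - s2 n = d - 1)).card with hA
  set B : ℕ → ℕ := fun N =>
    ((Finset.range N).filter (fun n => (s2 (n + (a + 1)) : ℤ) - s2 n = d + 1)).card with hB
  set C : ℕ → ℕ := fun N =>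
    ((Finset.range N).filter (fun n => (s2 (n + (2 * a + 1)) : ℤ) - s2 n = d)).card with hC
  have key : ∀ N, C (2 * N) = A N + B N := by
    intro N
    rw [hC, hA, hB]
    simp only
    rw [card_filter_two_mul]
    congr 1
    · apply congrArg Finset.card
      apply Finset.filter_congr
      intro m _
      have e1 : 2 * m + (2 * a + 1) = 2 * (m + a) + 1 := by ring
      rw [e1, s2_two_mul_add_one, s2_two_mul]
      push_cast
      constructor <;> intro h <;> omega
    · apply congrArg Finset.card
      apply Finset.filter_congr
      intro m _
      have e1 : 2 * m + 1 + (2 * a + 1) = 2 * (m + (a + 1)) := by ring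
      rw [e1, s2_two_mul, s2_two_mul_add_one]
      push_cast
      constructor <;> intro h <;> omega
  have htwo : Tendsto (fun N : ℕ => 2 * N) atTop atTop :=
    tendsto_atTop_atTop.mpr (fun b => ⟨b, fun n hn => by omega⟩)
  have hz2 : Tendsto (fun N : ℕ => (C (2 * N) : ℝ) / ((2 * N : ℕ) : ℝ)) atTop (nhds z) :=
    hz.comp htwo
  have heq : ∀ N : ℕ, (C (2 * N) : ℝ) / ((2 * N : ℕ) : ℝ) =
      (1 / 2) * ((A N : ℝ) / N + (B N : ℝ) / N) := by
    intro N
    rcases Nat.eq_zero_or_pos N with h | h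
    · have hA0 : A 0 = 0 := by simp [hA]
      have hB0 : B 0 = 0 := by simp [hB]
      simp [h, hA0, hB0]
    · rw [key]
      have hN : (N : ℝ) ≠ 0 := Nat.cast_ne_zero.mpr (by omega)
      push_cast
      field_simp
  have hlim : Tendsto (fun N : ℕ => (C (2 * N) : ℝ) / ((2 * N : ℕ) : ℝ)) atTop
      (nhds ((1 / 2) * (x + y))) := by
    have : Tendsto (fun N : ℕ => (1 / 2) * ((A N : ℝ) / N + (B N : ℝ) / N)) atTop
        (nhds ((1 / 2) * (x + y))) := ((hx.add hy).const_mul (1 / 2))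
    exact this.congr (fun N => (heq N).symm)
  exact tendsto_nhds_unique hz2 hlim
end
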